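/- arXiv:2204.01469 — 4 statements merged into one kernel-verified Lean document; each statement's English description precedes it below -/
import Mathlib

section
/- Let p be a probability distribution on a finite set {x_1, ..., x_K} and let D consist of N i.i.d. samples from p (N ≥ 1). Let p̂ denote the empirical (maximum-likelihood) distribution p̂(x_k) = c(x_k)/N, where c(x_k) is the number of samples equal to x_k, and let Ĥ_mle(D) = −Σ_{k=1}^K p̂(x_k) log p̂(x_k) be the plug-in entropy estimator (with the convention 0 log 0 = 0). Then E[Ĥ_mle(D)] ≤ H(p), where H(p) = −Σ_{k=1}^K p(x_k) log p(x_k); i.e., the plug-in entropy estimator is negatively biased. -/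
open Finset Real

/-- Shannon entropy of a finite distribution (convention `0 * log 0 = 0`,
which holds automatically since `Real.log 0 = 0`). -/
noncomputable def entropy {K : ℕ} (p : Fin K → ℝ) : ℝ := -∑ k, p k * Real.log (p k)

/-- The empirical (maximum-likelihood) distribution of a dataset of `N` samples. -/
noncomputable def empirical {N K : ℕ} (D : Fin N → Fin K) (k : Fin K) : ℝ :=
  ((Finset.univ.filter (fun n => D n = k)).card : ℝ) / N

/-- Expectation of a statistic over `N` i.i.d. samples from `p`. -/
noncomputable def expect {N K : ℕ} (p : Fin K → ℝ) (f : (Fin N → Fin K) → ℝ) : ℝ :=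
  ∑ D : Fin N → Fin K, (∏ n, p (D n)) * f D

lemma entropy_eq_sum_negMulLog {K : ℕ} (q : Fin K → ℝ) :
    entropy q = ∑ k, Real.negMulLog (q k) := by
  simp [entropy, Real.negMulLog, ← Finset.sum_neg_distrib, neg_mul]

lemma weights_sum_one {K N : ℕ} (p : Fin K → ℝ) (hsum : ∑ k, p k = 1) :
    ∑ D : Fin N → Fin K, ∏ n, p (D n) = 1 := by
  rw [← Fintype.prod_sum (fun (_ : Fin N) (k : Fin K) => p k)]
  simp [hsum]

lemma mean_empirical {K N : ℕ} (hN : 1 ≤ N) (p : Fin K → ℝ)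
    (hsum : ∑ k, p k = 1) (k : Fin K) :
    ∑ D : Fin N → Fin K, (∏ n, p (D n)) * empirical D k = p k := by
  have hNne : (N : ℝ) ≠ 0 := Nat.cast_ne_zero.mpr (by omega)
  have hcard : ∀ D : Fin N → Fin K,
      ((Finset.univ.filter (fun n => D n = k)).card : ℝ)
        = ∑ n : Fin N, (if D n = k then (1 : ℝ) else 0) := by
    intro D
    rw [Finset.card_filter]
    push_cast
    rfl
  have key : ∀ n : Fin N,
      ∑ D : Fin N → Fin K, (∏ m, p (D m)) * (if D n = k then (1 : ℝ) else 0) = p k := by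
    intro n
    have : ∀ D : Fin N → Fin K,
        (∏ m, p (D m)) * (if D n = k then (1 : ℝ) else 0)
          = ∏ m, (fun (m : Fin N) (j : Fin K) =>
              if m = n then (if j = k then p j else 0) else p j) m (D m) := by
      intro D
      by_cases h : D n = k
      · simp only [h, if_true, mul_one]
        refine Finset.prod_congr rfl fun m _ => ?_
        by_cases hm : m = n <;> simp [hm, h]
      · simp only [h, if_false, mul_zero]
        exact (Finset.prod_eq_zero (Finset.mem_univ n) (by simp [h])).symm
    rw [Finset.sum_congr rfl (fun D _ => this D),
      ← Fintype.prod_sum (fun (m : Fin N) (j : Fin K) =>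
          if m = n then (if j = k then p j else 0) else p j)]
    have : ∀ m : Fin N, (∑ j : Fin K, if m = n then (if j = k then p j else 0) else p j)
        = if m = n then p k else 1 := by
      intro m
      by_cases hm : m = n <;> simp [hm, hsum, Finset.sum_ite_eq']
    rw [Finset.prod_congr rfl (fun m _ => this m), Finset.prod_ite_eq' Finset.univ n
      (fun _ => p k)]
    simp
  calc ∑ D : Fin N → Fin K, (∏ n, p (D n)) * empirical D k
      = ∑ D : Fin N → Fin K, ∑ n : Fin N,
          ((∏ m, p (D m)) * (if D n = k then (1 : ℝ) else 0)) / N := by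
        refine Finset.sum_congr rfl fun D _ => ?_
        rw [empirical, hcard D, ← Finset.sum_div, ← Finset.mul_sum, mul_div_assoc]
    _ = ∑ n : Fin N, (∑ D : Fin N → Fin K,
          (∏ m, p (D m)) * (if D n = k then (1 : ℝ) else 0)) / N := by
        rw [Finset.sum_comm]
        simp [Finset.sum_div]
    _ = ∑ n : Fin N, p k / N := by
        refine Finset.sum_congr rfl fun n _ => by rw [key n]
    _ = p k := by
        rw [Finset.sum_const, Finset.card_univ, Fintype.card_fin, nsmul_eq_mul]
        field_simp

/-- The plug-in entropy estimator is negatively biased: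
`E[Ĥ_mle(D)] ≤ H(p)`. -/
theorem plugin_entropy_negatively_biased {K N : ℕ} (hN : 1 ≤ N)
    (p : Fin K → ℝ) (hp : ∀ k, 0 ≤ p k) (hsum : ∑ k, p k = 1) :
    expect p (fun D : Fin N → Fin K => entropy (empirical D)) ≤ entropy p := by
  have hw0 : ∀ D : Fin N → Fin K, 0 ≤ ∏ n, p (D n) := fun D =>
    Finset.prod_nonneg fun n _ => hp (D n)
  have hw1 : ∑ D : Fin N → Fin K, ∏ n, p (D n) = 1 := weights_sum_one p hsum
  have hemp : ∀ (D : Fin N → Fin K) (k : Fin K), empirical D k ∈ Set.Ici (0 : ℝ) := by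
    intro D k
    simp only [Set.mem_Ici]
    unfold empirical
    positivity
  rw [_root_.expect, entropy_eq_sum_negMulLog]
  calc ∑ D : Fin N → Fin K, (∏ n, p (D n)) * entropy (empirical D)
      = ∑ k : Fin K, ∑ D : Fin N → Fin K,
          (∏ n, p (D n)) * Real.negMulLog (empirical D k) := by
        rw [Finset.sum_comm]
        refine Finset.sum_congr rfl fun D _ => ?_
        rw [entropy_eq_sum_negMulLog, Finset.mul_sum]
    _ ≤ ∑ k : Fin K, Real.negMulLog (p k) := by
        refine Finset.sum_le_sum fun k _ => ?_
        have := Real.concaveOn_negMulLog.le_map_sum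
          (t := Finset.univ) (w := fun D : Fin N → Fin K => ∏ n, p (D n))
          (p := fun D : Fin N → Fin K => empirical D k)
          (fun D _ => hw0 D) hw1 (fun D _ => hemp D k)
        simpa [smul_eq_mul, mean_empirical hN p hsum k] using this
end

section
/- Let p be a probability distribution on a finite set {x_1, ..., x_K} with p(x_k) > 0 for every k. For each N, let D_N consist of N i.i.d. samples from p and let Ĥ_mle(D_N) be the plug-in entropy estimator. Then N · (E[Ĥ_mle(D_N)] − H(p)) → −(K − 1)/2 as N → ∞; equivalently, the bias of the plug-in estimator is −(K−1)/(2N) + o(1/N) (the Miller–Madow bias formula). -/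
open Finset Real Filter

/-!
Write `φ x = x log x`, so that the bias is `-∑ₖ (E φ(p̂ₖ) - φ(pₖ))`. The count `N p̂ₖ` has
probability generating function `(pₖ t + 1 - pₖ) ^ N`; differentiating it gives the factorial
moments, hence `E (p̂ₖ - pₖ) = 0`, `E (p̂ₖ - pₖ)² = pₖ (1 - pₖ) / N` and `E (p̂ₖ - pₖ)⁴ = O(1/N²)`.
Expanding `φ` to second order at `pₖ`, with a remainder `O(|x - pₖ|³)` uniformly on `[0, ∞)`, gives
`N (E φ(p̂ₖ) - φ(pₖ)) = (1 - pₖ) / 2 + O(N^(-1/2))`. Summing over `k` yields `-(K - 1) / 2`.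
-/

section FactorialMoments

open Polynomial

variable {ι α R : Type*} [Fintype ι] [DecidableEq ι] [Fintype α] [DecidableEq α] [CommRing R]

def count (a : α) (D : ι → α) : ℕ := #{i | D i = a}

theorem sum_prod_mul_pow_count {p : α → R} (hp : ∑ a, p a = 1) (a : α) (t : R) :
    ∑ D : ι → α, (∏ i, p (D i)) * t ^ count a D = (p a * t + (1 - p a)) ^ Fintype.card ι := by
  have hsplit : p a * t + (1 - p a) = ∑ b, p b * if b = a then t else 1 := by
    have hrest : 1 - p a = ∑ b ∈ univ.erase a, p b := by
      rw [← hp, ← add_sum_erase _ _ (mem_univ a), add_sub_cancel_left]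
    rw [← add_sum_erase _ _ (mem_univ a), if_pos rfl, hrest]
    exact congrArg _ (sum_congr rfl fun b hb => by rw [if_neg (ne_of_mem_erase hb), mul_one])
  rw [hsplit, ← card_univ, ← prod_const, Fintype.prod_sum]
  refine sum_congr rfl fun D _ => ?_
  rw [prod_mul_distrib, prod_ite, prod_const_one, mul_one, prod_const, count]

theorem iterate_derivative_C_mul_X_add_C_pow (a b : R) (n j : ℕ) :
    derivative^[j] ((C a * X + C b) ^ n)
      = C (a ^ j * n.descFactorial j) * (C a * X + C b) ^ (n - j) := by
  induction j with
  | zero => simp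
  | succ j ih =>
    rw [Function.iterate_succ_apply', ih, derivative_C_mul, derivative_pow,
      Nat.descFactorial_succ, Nat.sub_sub]
    simp only [derivative_add, derivative_C_mul_X, derivative_C, add_zero, C_mul, C_pow,
      Nat.cast_mul, map_natCast]
    ring

theorem sum_prod_mul_descFactorial_count {p : α → R} (hp : ∑ a, p a = 1) (a : α) (j : ℕ) :
    ∑ D : ι → α, (∏ i, p (D i)) * ((count a D).descFactorial j : R)
      = p a ^ j * (Fintype.card ι).descFactorial j := by
  have hp' : ∑ a, C (p a) = 1 := by rw [← map_sum, hp, map_one]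
  have h := congrArg (fun P => eval 1 (derivative^[j] P)) (sum_prod_mul_pow_count (ι := ι) hp' a X)
  rw [← C_1, ← C_sub, iterate_derivative_C_mul_X_add_C_pow] at h
  simpa [iterate_derivative_sum, eval_finsetSum, iterate_derivative_C_mul,
    iterate_derivative_X_pow_eq_C_mul, ← map_prod] using h

end FactorialMoments

section Expectation

variable {N K : ℕ} (p : Fin K → ℝ)

theorem expect_add (f g : (Fin N → Fin K) → ℝ) :
    expect p (fun D => f D + g D) = expect p f + expect p g := by
  simp only [_root_.expect, mul_add, sum_add_distrib]

theorem expect_sub (f g : (Fin N → Fin K) → ℝ) :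
    expect p (fun D => f D - g D) = expect p f - expect p g := by
  simp only [_root_.expect, mul_sub, sum_sub_distrib]

theorem expect_const_mul (c : ℝ) (f : (Fin N → Fin K) → ℝ) :
    expect p (fun D => c * f D) = c * expect p f := by
  simp only [_root_.expect, mul_sum, mul_left_comm]

theorem expect_div_const (f : (Fin N → Fin K) → ℝ) (c : ℝ) :
    expect p (fun D => f D / c) = expect p f / c := by
  simp only [_root_.expect, sum_div, mul_div_assoc]

theorem expect_neg (f : (Fin N → Fin K) → ℝ) :
    expect p (fun D => -f D) = -expect p f := by
  simp only [_root_.expect, mul_neg, sum_neg_distrib]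

theorem expect_sum {ι : Type*} (s : Finset ι) (f : ι → (Fin N → Fin K) → ℝ) :
    expect p (fun D => ∑ i ∈ s, f i D) = ∑ i ∈ s, expect p (f i) := by
  simp only [_root_.expect, mul_sum]
  exact sum_comm

theorem expect_const_of_sum_eq_one {p : Fin K → ℝ} (hp : ∑ k, p k = 1) (c : ℝ) :
    expect p (fun _ : Fin N → Fin K => c) = c := by
  rw [_root_.expect, ← sum_mul, ← Fintype.prod_sum, hp, prod_const_one, one_mul]

variable {p}

theorem expect_mono (hp : ∀ k, 0 ≤ p k) {f g : (Fin N → Fin K) → ℝ} (hfg : ∀ D, f D ≤ g D) :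
    expect p f ≤ expect p g :=
  sum_le_sum fun D _ => mul_le_mul_of_nonneg_left (hfg D) (prod_nonneg fun n _ => hp (D n))

theorem abs_expect_le_expect_abs (hp : ∀ k, 0 ≤ p k) (f : (Fin N → Fin K) → ℝ) :
    |expect p f| ≤ expect p (fun D => |f D|) := by
  refine (abs_sum_le_sum_abs _ _).trans (le_of_eq (sum_congr rfl fun D _ => ?_))
  rw [abs_mul, abs_of_nonneg (prod_nonneg fun n _ => hp (D n))]

end Expectation

section CountMoments

variable {N K : ℕ} {p : Fin K → ℝ}

theorem expect_descFactorial_count (hp : ∑ k, p k = 1) (k : Fin K) (j : ℕ) :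
    expect p (fun D : Fin N → Fin K => ((count k D).descFactorial j : ℝ))
      = p k ^ j * N.descFactorial j := by
  simpa [_root_.expect] using sum_prod_mul_descFactorial_count (ι := Fin N) hp k j

theorem cast_descFactorial_eq_prod (c j : ℕ) :
    (c.descFactorial j : ℝ) = ∏ i ∈ range j, ((c : ℝ) - i) := by
  rw [← descPochhammer_eval_eq_descFactorial]
  induction j with
  | zero => simp
  | succ j ih => rw [descPochhammer_succ_eval, ih, prod_range_succ]

theorem expect_count (hp : ∑ k, p k = 1) (k : Fin K) :
    expect p (fun D : Fin N → Fin K => (count k D : ℝ)) = N * p k := by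
  simpa [mul_comm] using expect_descFactorial_count (N := N) hp k 1

theorem expect_count_sub_sq (hp : ∑ k, p k = 1) (k : Fin K) :
    expect p (fun D : Fin N → Fin K => ((count k D : ℝ) - N * p k) ^ 2)
      = N * p k * (1 - p k) := by
  set m := (N : ℝ) * p k
  have hexpand : ∀ c : ℕ, ((c : ℝ) - m) ^ 2
      = (c.descFactorial 2 : ℝ) + ((1 - 2 * m) * (c.descFactorial 1 : ℝ) + m ^ 2) := by
    intro c
    simp only [cast_descFactorial_eq_prod, prod_range_succ, prod_range_zero]
    ring
  simp only [hexpand, expect_add, expect_const_mul, expect_const_of_sum_eq_one hp,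
    expect_descFactorial_count hp]
  simp only [cast_descFactorial_eq_prod, prod_range_succ, prod_range_zero, m]
  ring

theorem expect_count_sub_pow_four (hp : ∑ k, p k = 1) (k : Fin K) :
    expect p (fun D : Fin N → Fin K => ((count k D : ℝ) - N * p k) ^ 4)
      = N * p k * (1 - p k) * (1 + 3 * (N - 2) * p k * (1 - p k)) := by
  set m := (N : ℝ) * p k
  have hexpand : ∀ c : ℕ, ((c : ℝ) - m) ^ 4
      = (c.descFactorial 4 : ℝ) + ((6 - 4 * m) * (c.descFactorial 3 : ℝ)
        + ((7 - 12 * m + 6 * m ^ 2) * (c.descFactorial 2 : ℝ)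
        + ((1 - 4 * m + 6 * m ^ 2 - 4 * m ^ 3) * (c.descFactorial 1 : ℝ) + m ^ 4))) := by
    intro c
    simp only [cast_descFactorial_eq_prod, prod_range_succ, prod_range_zero]
    ring
  simp only [hexpand, expect_add, expect_const_mul, expect_const_of_sum_eq_one hp,
    expect_descFactorial_count hp]
  simp only [cast_descFactorial_eq_prod, prod_range_succ, prod_range_zero, m]
  ring

end CountMoments

section EmpiricalMoments

variable {N K : ℕ} {p : Fin K → ℝ}

theorem empirical_sub_eq (hN : N ≠ 0) (D : Fin N → Fin K) (k : Fin K) :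
    empirical D k - p k = ((count k D : ℝ) - N * p k) / N := by
  rw [sub_div, mul_div_cancel_left₀ _ (Nat.cast_ne_zero.2 hN)]
  rfl

theorem expect_empirical_sub (hp : ∑ k, p k = 1) (hN : N ≠ 0) (k : Fin K) :
    expect p (fun D : Fin N → Fin K => empirical D k - p k) = 0 := by
  simp only [empirical_sub_eq hN, expect_div_const, expect_sub, expect_count hp,
    expect_const_of_sum_eq_one hp, sub_self, zero_div]

theorem expect_empirical_sub_sq (hp : ∑ k, p k = 1) (hN : N ≠ 0) (k : Fin K) :
    expect p (fun D : Fin N → Fin K => (empirical D k - p k) ^ 2) = p k * (1 - p k) / N := by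
  have hN' : (N : ℝ) ≠ 0 := Nat.cast_ne_zero.2 hN
  simp only [empirical_sub_eq hN, div_pow, expect_div_const, expect_count_sub_sq hp]
  field_simp

theorem expect_empirical_sub_pow_four_le (hp : ∑ k, p k = 1) (hN : N ≠ 0) {k : Fin K}
    (hk₀ : 0 ≤ p k) (hk₁ : p k ≤ 1) :
    expect p (fun D : Fin N → Fin K => (empirical D k - p k) ^ 4) ≤ 3 / N ^ 2 := by
  have hN' : (1 : ℝ) ≤ N := Nat.one_le_cast.2 (Nat.one_le_iff_ne_zero.2 hN)
  simp only [empirical_sub_eq hN, div_pow, expect_div_const, expect_count_sub_pow_four hp]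
  have hq₀ : 0 ≤ p k * (1 - p k) := mul_nonneg hk₀ (by linarith)
  have hq₁ : p k * (1 - p k) ≤ 1 / 4 := by nlinarith [sq_nonneg (2 * p k - 1)]
  have hq : p k * (1 - p k) * (1 + 3 * (N - 2) * p k * (1 - p k)) ≤ 3 * N := by
    have hsq : (p k * (1 - p k)) ^ 2 ≤ 1 / 16 := by nlinarith
    nlinarith [mul_le_mul_of_nonneg_left hsq (by linarith : (0 : ℝ) ≤ N)]
  rw [div_le_div_iff₀ (by positivity) (by positivity)]
  calc (N : ℝ) * p k * (1 - p k) * (1 + 3 * (N - 2) * p k * (1 - p k)) * N ^ 2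
      = (N : ℝ) ^ 3 * (p k * (1 - p k) * (1 + 3 * (N - 2) * p k * (1 - p k))) := by ring
    _ ≤ (N : ℝ) ^ 3 * (3 * N) := by gcongr
    _ = 3 * (N : ℝ) ^ 4 := by ring

end EmpiricalMoments

section MulLogExpansion

theorem abs_mul_log_sub_taylor_le {y : ℝ} (hy : 0 ≤ y) :
    |y * log y - (y - 1) - (y - 1) ^ 2 / 2| ≤ 4 * |y - 1| ^ 3 := by
  obtain ⟨u, rfl⟩ : ∃ u, y = 1 + u := ⟨y - 1, by ring⟩
  rw [add_sub_cancel_left]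
  rcases le_or_gt |u| (1 / 2) with hnear | hfar
  · have hseries := abs_log_sub_add_sum_range_le (x := -u) (by rw [abs_neg]; linarith) 2
    norm_num [sum_range_succ] at hseries
    set E := log (1 + u) - (u - u ^ 2 / 2)
    have hE_le : |E| ≤ 2 * |u| ^ 3 := calc
      |E| ≤ |u| ^ 3 / (1 - |u|) := by convert hseries using 2; ring
      _ ≤ 2 * |u| ^ 3 := by
        rw [div_le_iff₀ (by linarith)]; nlinarith [pow_nonneg (abs_nonneg u) 3]
    have hy_le : |1 + u| ≤ 3 / 2 := by rw [abs_le] at hnear ⊢; constructor <;> linarith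
    calc |(1 + u) * log (1 + u) - u - u ^ 2 / 2| = |(1 + u) * E - u ^ 3 / 2| := by
          simp only [E]; ring_nf
      _ ≤ |1 + u| * |E| + |u| ^ 3 / 2 :=
        (abs_sub _ _).trans_eq (by rw [abs_mul, abs_div, abs_pow, abs_two])
      _ ≤ 3 / 2 * (2 * |u| ^ 3) + |u| ^ 3 / 2 := by gcongr
      _ ≤ 4 * |u| ^ 3 := by linarith [pow_nonneg (abs_nonneg u) 3]
  · have hlow : u ≤ (1 + u) * log (1 + u) := by
      simpa using self_sub_one_le_mul_log hy
    have hup : (1 + u) * log (1 + u) ≤ u + u ^ 2 := by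
      rcases hy.eq_or_lt with h0 | hpos
      · rw [← h0]; nlinarith
      · nlinarith [log_le_sub_one_of_pos hpos]
    have hu2 : u ^ 2 / 2 ≤ |u| ^ 3 := by
      rw [← sq_abs]; nlinarith [abs_nonneg u]
    rw [abs_le]; constructor <;> nlinarith

noncomputable def mulLogRemainder (a x : ℝ) : ℝ :=
  x * log x - a * log a - (log a + 1) * (x - a) - (x - a) ^ 2 / (2 * a)

theorem abs_mulLogRemainder_le {a x : ℝ} (ha : 0 < a) (hx : 0 ≤ x) :
    |mulLogRemainder a x| ≤ 4 / a ^ 2 * |x - a| ^ 3 := by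
  have hlog : a * (x / a * log (x / a)) = x * log x - x * log a := by
    rw [← mul_assoc, mul_div_cancel₀ _ ha.ne']
    rcases hx.eq_or_lt with rfl | hpos
    · simp
    · rw [log_div hpos.ne' ha.ne', mul_sub]
  have hscale : mulLogRemainder a x
      = a * (x / a * log (x / a) - (x / a - 1) - (x / a - 1) ^ 2 / 2) := by
    rw [mulLogRemainder, mul_sub a, mul_sub a, hlog]
    field_simp
    ring
  have hdist : |x / a - 1| = |x - a| / a := by
    rw [div_sub_one ha.ne', abs_div, abs_of_pos ha]
  calc |mulLogRemainder a x| ≤ a * (4 * |x / a - 1| ^ 3) := by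
        rw [hscale, abs_mul, abs_of_pos ha]
        exact mul_le_mul_of_nonneg_left (abs_mul_log_sub_taylor_le (by positivity)) ha.le
    _ = 4 / a ^ 2 * |x - a| ^ 3 := by
        rw [hdist]; field_simp

end MulLogExpansion

section Bias

variable {N K : ℕ} {p : Fin K → ℝ}

theorem empirical_nonneg (D : Fin N → Fin K) (k : Fin K) : 0 ≤ empirical D k := by
  unfold empirical; positivity

theorem expect_mul_log_empirical (hp : ∑ k, p k = 1) (hN : N ≠ 0) {k : Fin K} (hk : p k ≠ 0) :
    expect p (fun D : Fin N → Fin K => empirical D k * log (empirical D k))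
      = p k * log (p k) + (1 - p k) / (2 * N)
        + expect p (fun D : Fin N → Fin K => mulLogRemainder (p k) (empirical D k)) := by
  have hexpand : (fun D : Fin N → Fin K => empirical D k * log (empirical D k))
      = fun D => p k * log (p k) + (log (p k) + 1) * (empirical D k - p k)
        + (empirical D k - p k) ^ 2 / (2 * p k) + mulLogRemainder (p k) (empirical D k) := by
    funext D; rw [mulLogRemainder]; ring
  have hN' : (N : ℝ) ≠ 0 := Nat.cast_ne_zero.2 hN
  rw [hexpand]
  simp only [expect_add, expect_const_mul, expect_div_const,
    expect_const_of_sum_eq_one hp, expect_empirical_sub hp hN, expect_empirical_sub_sq hp hN]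
  field_simp
  ring

theorem abs_expect_mulLogRemainder_empirical_le (hp : ∀ k, 0 < p k) (hsum : ∑ k, p k = 1)
    (hN : N ≠ 0) (k : Fin K) :
    |expect p (fun D : Fin N → Fin K => mulLogRemainder (p k) (empirical D k))|
      ≤ 8 / (p k ^ 2 * N * √N) := by
  set a := p k
  set s := √(N : ℝ)
  have hN' : (0 : ℝ) < N := Nat.cast_pos.2 (Nat.pos_of_ne_zero hN)
  have hs : 0 < s := sqrt_pos.2 hN'
  have hss : s ^ 2 = N := sq_sqrt hN'.le
  have ha : 0 < a := hp k
  have ha₁ : a ≤ 1 := hsum ▸ single_le_sum (fun i _ => (hp i).le) (mem_univ k)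
  -- AM-GM; with `s = √N` both central moments contribute `O(N ^ (-3/2))`
  have hcube : ∀ y : ℝ, |y| ^ 3 ≤ (y ^ 2 / s + s * y ^ 4) / 2 := by
    intro y
    have := two_mul_le_add_sq |y| (s * |y| ^ 2)
    have h4 : y ^ 4 = (|y| ^ 2) ^ 2 := by rw [sq_abs]; ring
    rw [div_add' _ _ _ hs.ne', div_div, le_div_iff₀ (by positivity), h4, ← sq_abs]
    linarith
  have hp₀ : ∀ k, 0 ≤ p k := fun k => (hp k).le
  calc |expect p (fun D : Fin N → Fin K => mulLogRemainder a (empirical D k))|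
      ≤ expect p (fun D => 4 / a ^ 2 * (((empirical D k - a) ^ 2 / s
          + s * (empirical D k - a) ^ 4) / 2)) := by
        refine (abs_expect_le_expect_abs hp₀ _).trans (expect_mono hp₀ fun D => ?_)
        exact (abs_mulLogRemainder_le ha (empirical_nonneg D k)).trans
          (mul_le_mul_of_nonneg_left (hcube _) (by positivity))
    _ = 2 / a ^ 2 * (expect p (fun D : Fin N → Fin K => (empirical D k - a) ^ 2) / s
          + s * expect p (fun D : Fin N → Fin K => (empirical D k - a) ^ 4)) := by
        simp only [expect_const_mul, expect_div_const, expect_add]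
        ring
    _ ≤ 2 / a ^ 2 * (a * (1 - a) / N / s + s * (3 / N ^ 2)) := by
        rw [expect_empirical_sub_sq hsum hN]
        gcongr
        exact expect_empirical_sub_pow_four_le hsum hN ha.le ha₁
    _ ≤ 8 / (a ^ 2 * N * s) := by
        have hq : a * (1 - a) ≤ 1 := by nlinarith
        rw [← hss]
        field_simp
        nlinarith

theorem tendsto_mul_expect_mul_log_empirical (hp : ∀ k, 0 < p k) (hsum : ∑ k, p k = 1)
    (k : Fin K) :
    Tendsto (fun N : ℕ => (N : ℝ) * (expect p (fun D : Fin N → Fin K =>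
        empirical D k * log (empirical D k)) - p k * log (p k)))
      atTop (nhds ((1 - p k) / 2)) := by
  have hbound : Tendsto (fun N : ℕ => 8 / (p k ^ 2 * √N)) atTop (nhds 0) :=
    tendsto_const_nhds.div_atTop <|
      (tendsto_sqrt_atTop.comp tendsto_natCast_atTop_atTop).const_mul_atTop (pow_pos (hp k) 2)
  have hrem : Tendsto (fun N : ℕ => (N : ℝ) * expect p (fun D : Fin N → Fin K =>
      mulLogRemainder (p k) (empirical D k))) atTop (nhds 0) := by
    refine squeeze_zero_norm' ?_ hbound
    filter_upwards [eventually_ne_atTop 0] with N hN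
    have hN' : (0 : ℝ) < N := Nat.cast_pos.2 (Nat.pos_of_ne_zero hN)
    rw [norm_mul, Real.norm_natCast, norm_eq_abs]
    calc (N : ℝ) * |_| ≤ N * (8 / (p k ^ 2 * N * √N)) := by
          gcongr; exact abs_expect_mulLogRemainder_empirical_le hp hsum hN k
      _ = 8 / (p k ^ 2 * √N) := by field_simp
  have hlim := hrem.const_add ((1 - p k) / 2)
  rw [add_zero] at hlim
  refine hlim.congr' ?_
  filter_upwards [eventually_ne_atTop 0] with N hN
  rw [expect_mul_log_empirical hsum hN (hp k).ne']
  field_simp [Nat.cast_ne_zero.2 hN]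
  ring

end Bias

/-- Miller–Madow bias formula: `N · (E[Ĥ_mle(D_N)] − H(p)) → −(K−1)/2` as `N → ∞`;
i.e. the bias of the plug-in estimator is `−(K−1)/(2N) + o(1/N)`. -/
theorem miller_madow_bias_formula {K : ℕ}
    (p : Fin K → ℝ) (hp : ∀ k, 0 < p k) (hsum : ∑ k, p k = 1) :
    Tendsto
      (fun N : ℕ =>
        (N : ℝ) * (expect p (fun D : Fin N → Fin K => entropy (empirical D)) - entropy p))
      atTop (nhds (-(((K : ℝ) - 1) / 2))) := by
  have hsplit : ∀ N : ℕ,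
      (N : ℝ) * (expect p (fun D : Fin N → Fin K => entropy (empirical D)) - entropy p)
        = ∑ k, -((N : ℝ) * (expect p (fun D : Fin N → Fin K =>
            empirical D k * log (empirical D k)) - p k * log (p k))) := by
    intro N
    simp only [entropy, expect_neg, expect_sum, neg_sub_neg, ← sum_sub_distrib, mul_sum]
    exact sum_congr rfl fun k _ => by ring
  have hlimit : ∑ k, -((1 - p k) / 2) = -(((K : ℝ) - 1) / 2) := by
    rw [sum_neg_distrib, ← sum_div, sum_sub_distrib, hsum, sum_const, card_univ,
      Fintype.card_fin, nsmul_one]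
  rw [← hlimit]
  exact (tendsto_finsetSum _ fun k _ => (tendsto_mul_expect_mul_log_empirical hp hsum k).neg)
    |>.congr fun N => (hsplit N).symm
end

section
/- Let p be a probability distribution on a finite set {x_1, ..., x_K}. For each N, let D_N consist of N i.i.d. samples from p and let Ĥ_mle(D_N) be the plug-in entropy estimator. Then the plug-in estimator is asymptotically unbiased: E[Ĥ_mle(D_N)] → H(p) as N → ∞. -/
open Finset Real Filter

/-! The number of samples equal to `k` is binomially distributed with parameters `N` and `p k`,
so `E[φ(p̂ k)]` is exactly the `N`-th Bernstein polynomial of `φ` evaluated at `p k`. Bernstein's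
theorem makes this converge to `φ (p k)` for every `φ` continuous on `[0, 1]`; the entropy is minus
a finite sum of such terms with `φ x = x log x`. -/

namespace Polynomial

variable {R : Type*} [CommRing R]

theorem coeff_C_mul_X_add_C_pow (u v : R) (N c : ℕ) :
    ((C u * X + C v) ^ N).coeff c = N.choose c * u ^ c * v ^ (N - c) := by
  simp_rw [add_pow, finsetSum_coeff, mul_pow, ← C_pow, mul_assoc, mul_comm (X ^ _), ← mul_assoc,
    ← C_eq_natCast, ← C_mul, coeff_C_mul_X_pow]
  rw [sum_ite_eq]
  split_ifs with hc
  · ring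
  · simp [Nat.choose_eq_zero_of_lt (by simpa using hc)]

theorem sum_C_prod_mul_X_pow_card_filter {α : Type*} [Fintype α] [DecidableEq α]
    (p : α → R) (hsum : ∑ j, p j = 1) (a : α) (N : ℕ) :
    ∑ D : Fin N → α, C (∏ n, p (D n)) * X ^ #{n | D n = a} = (C (p a) * X + C (1 - p a)) ^ N := by
  have hlin : C (p a) * X + C (1 - p a) = ∑ j, C (p j) * X ^ (if j = a then 1 else 0) := by
    rw [← hsum, ← Finset.add_sum_erase _ _ (mem_univ a), ← Finset.add_sum_erase _ _ (mem_univ a)]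
    simp only [if_pos, pow_one, add_sub_cancel_left, map_sum]
    congr 1
    exact sum_congr rfl fun j hj => by simp [ne_of_mem_erase hj]
  rw [hlin, Fintype.sum_pow]
  refine Fintype.sum_congr _ _ fun D => ?_
  rw [prod_mul_distrib, map_prod, prod_pow_eq_pow_sum, card_filter]

end Polynomial

open Polynomial in
theorem sum_prod_filter_card_eq_binomial {R α : Type*} [CommRing R] [Fintype α] [DecidableEq α]
    (p : α → R) (hsum : ∑ j, p j = 1) (a : α) (N c : ℕ) :
    ∑ D : Fin N → α with #{n | D n = a} = c, ∏ n, p (D n) =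
      N.choose c * p a ^ c * (1 - p a) ^ (N - c) := by
  have h := congrArg (coeff · c) (sum_C_prod_mul_X_pow_card_filter p hsum a N)
  simp only [coeff_C_mul_X_add_C_pow, finsetSum_coeff, coeff_C_mul_X_pow] at h
  rw [← h, sum_filter]
  simp_rw [eq_comm]

theorem expect_comp_card_filter {N K : ℕ} (p : Fin K → ℝ) (hsum : ∑ j, p j = 1) (a : Fin K)
    (g : ℕ → ℝ) :
    expect p (fun D : Fin N → Fin K => g #{n | D n = a}) =
      ∑ c ∈ range (N + 1), N.choose c * p a ^ c * (1 - p a) ^ (N - c) * g c := by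
  have hmaps (D : Fin N → Fin K) (_ : D ∈ univ) : #{n | D n = a} ∈ range (N + 1) :=
    mem_range_succ_iff.2 <| (card_filter_le _ _).trans_eq (card_fin N)
  rw [_root_.expect, ← sum_fiberwise_of_maps_to hmaps]
  refine sum_congr rfl fun c _ => ?_
  rw [← sum_prod_filter_card_eq_binomial p hsum a N c, sum_mul]
  exact sum_congr rfl fun D hD => by rw [(mem_filter.1 hD).2]

open unitInterval in
theorem expect_comp_empirical_eq_bernsteinApproximation {N K : ℕ} (p : Fin K → ℝ)
    (hsum : ∑ j, p j = 1) (a : Fin K) (ha : p a ∈ I) {f : ℝ → ℝ} (hf : ContinuousOn f I) :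
    expect p (fun D : Fin N → Fin K => f (empirical D a)) =
      bernsteinApproximation N ⟨Set.domRestrict I f, hf.domRestrict⟩ ⟨p a, ha⟩ := by
  change expect p (fun D : Fin N → Fin K => (fun c : ℕ => f (c / N)) #{n | D n = a}) = _
  rw [expect_comp_card_filter p hsum a (fun c : ℕ => f (c / N)), ← Fin.sum_univ_eq_sum_range,
    bernsteinApproximation.apply]
  refine sum_congr rfl fun c _ => ?_
  rw [bernstein_apply, smul_eq_mul]
  rfl

theorem tendsto_expect_comp_empirical {K : ℕ} (p : Fin K → ℝ) (hp : ∀ k, 0 ≤ p k)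
    (hsum : ∑ k, p k = 1) (a : Fin K) {f : ℝ → ℝ} (hf : ContinuousOn f unitInterval) :
    Tendsto (fun N : ℕ => expect p (fun D : Fin N → Fin K => f (empirical D a)))
      atTop (nhds (f (p a))) := by
  have ha : p a ∈ unitInterval :=
    ⟨hp a, hsum ▸ single_le_sum (fun k _ => hp k) (mem_univ a)⟩
  simp_rw [expect_comp_empirical_eq_bernsteinApproximation p hsum a ha hf]
  exact ((continuous_eval_const _).tendsto _).comp (bernsteinApproximation_uniform _)

theorem expect_neg_sum {N K : ℕ} (p : Fin K → ℝ) {ι : Type*} (s : Finset ι)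
    (f : ι → (Fin N → Fin K) → ℝ) :
    expect p (fun D => -∑ i ∈ s, f i D) = -∑ i ∈ s, expect p (f i) := by
  simp only [_root_.expect, mul_neg, mul_sum, sum_neg_distrib]
  rw [sum_comm]

/-- The plug-in entropy estimator is asymptotically unbiased:
`E[Ĥ_mle(D_N)] → H(p)` as `N → ∞`. -/
theorem plugin_asymptotically_unbiased {K : ℕ}
    (p : Fin K → ℝ) (hp : ∀ k, 0 ≤ p k) (hsum : ∑ k, p k = 1) :
    Tendsto
      (fun N : ℕ => expect p (fun D : Fin N → Fin K => entropy (empirical D)))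
      atTop (nhds (entropy p)) := by
  simp only [entropy, expect_neg_sum]
  exact (tendsto_finsetSum _ fun k _ =>
    tendsto_expect_comp_empirical p hp hsum k continuous_mul_log.continuousOn).neg
end

section
/- Let K ≥ 2 be an integer. The function g⁻¹(α) = ψ(Kα + 1) − ψ(α + 1) is strictly increasing on [0, ∞), where ψ(t) = d/dt log Γ(t) is the digamma function; equivalently, its derivative K ψ₁(Kα + 1) − ψ₁(α + 1) is strictly positive for all α ≥ 0, where ψ₁ = ψ′ is the trigamma function. -/
open Real

/-- The digamma function `ψ(t) = d/dt log Γ(t)`. -/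
noncomputable def digamma (t : ℝ) : ℝ := deriv (fun s : ℝ => Real.log (Real.Gamma s)) t

/-- The trigamma function `ψ₁ = ψ′`. -/
noncomputable def trigamma (t : ℝ) : ℝ := deriv digamma t

/-!
On `(0, ∞)` the functions `BohrMollerup.logGammaSeq · n` converge to `log ∘ Γ`, and their
derivatives `log n - ∑_{k ≤ n} (x + k)⁻¹` and second derivatives `∑_{k ≤ n} (x + k)⁻²` converge
uniformly on bounded intervals away from `0`. Hence `ψ(x) = -γ + ∑ₖ ((k + 1)⁻¹ - (x + k)⁻¹)` and
`ψ₁(x) = ∑ₖ (x + k)⁻²`.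

Group the series `K ψ₁(Kα + 1) = ∑ₙ K (Kα + 1 + n)⁻²` into blocks `n = mK + j`, `j < K`. Since
`Kα + 1 + mK + j ≤ K (α + 1 + m)`, each of the `K` terms of block `m` is at least
`K⁻¹ (α + 1 + m)⁻²`, strictly so for `j = 0` when `K ≥ 2`; so block `m` exceeds the `m`-th term
`(α + 1 + m)⁻²` of `ψ₁(α + 1)`. The derivative of `ψ(Kα + 1) - ψ(α + 1)` is therefore positive.
-/

open Filter Topology Finset
open scoped Nat

noncomputable def digammaSeq (x : ℝ) (n : ℕ) : ℝ := log n - ∑ k ∈ range (n + 1), (x + k)⁻¹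

noncomputable def trigammaSeq (x : ℝ) (n : ℕ) : ℝ := ∑ k ∈ range (n + 1), ((x + k) ^ 2)⁻¹

noncomputable def digammaSeries (x : ℝ) : ℝ :=
  -eulerMascheroniConstant + ∑' k : ℕ, (((k : ℝ) + 1)⁻¹ - (x + k)⁻¹)

noncomputable def trigammaSeries (x : ℝ) : ℝ := ∑' k : ℕ, ((x + k) ^ 2)⁻¹

theorem summable_inv_add_nat_sq {x : ℝ} (hx : 0 < x) :
    Summable fun k : ℕ => ((x + k) ^ 2)⁻¹ :=
  ((Real.summable_one_div_nat_add_rpow x 2).mpr one_lt_two).congr fun k => by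
    rw [abs_of_pos (by positivity), rpow_two, one_div, add_comm]

theorem HasSum.sum_fin_mul_add {M : Type*} [AddCommMonoid M] [TopologicalSpace M]
    [ContinuousAdd M] [RegularSpace M] {f : ℕ → M} {a : M} {K : ℕ} [NeZero K] (h : HasSum f a) :
    HasSum (fun m => ∑ j : Fin K, f (m * K + j)) a := by
  refine ((Nat.divModEquiv K).symm.hasSum_iff.mpr h).prod_fiberwise fun m => ?_
  simpa [Nat.divModEquiv_symm_apply] using hasSum_fintype (fun j : Fin K => f (m * K + j))

theorem hasDerivAt_logGammaSeq (n : ℕ) {x : ℝ} (hx : 0 < x) :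
    HasDerivAt (BohrMollerup.logGammaSeq · n) (digammaSeq x n) x := by
  have hlog (k : ℕ) : HasDerivAt (fun y : ℝ => log (y + k)) (x + k)⁻¹ x := by
    simpa using ((hasDerivAt_id x).add_const (k : ℝ)).log (by positivity)
  have := (((hasDerivAt_id x).mul_const (log n)).add_const (log n !)).fun_sub
    (HasDerivAt.fun_sum (u := range (n + 1)) fun k _ => hlog k)
  simpa [digammaSeq, BohrMollerup.logGammaSeq] using this

theorem hasDerivAt_digammaSeq (n : ℕ) {x : ℝ} (hx : 0 < x) :
    HasDerivAt (digammaSeq · n) (trigammaSeq x n) x := by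
  have hinv (k : ℕ) : HasDerivAt (fun y : ℝ => (y + k)⁻¹) (-((x + k) ^ 2)⁻¹) x := by
    simpa [neg_div] using ((hasDerivAt_id x).add_const (k : ℝ)).fun_inv (by positivity)
  have := (hasDerivAt_const x (log n)).fun_sub
    (HasDerivAt.fun_sum (u := range (n + 1)) fun k _ => hinv k)
  simpa [digammaSeq, trigammaSeq] using this

theorem tendstoUniformlyOn_trigammaSeq {ε : ℝ} (hε : 0 < ε) :
    TendstoUniformlyOn (fun n x => trigammaSeq x n) trigammaSeries atTop (Set.Ioi ε) := by
  have h := tendstoUniformlyOn_tsum_nat (f := fun (k : ℕ) (x : ℝ) => ((x + k) ^ 2)⁻¹)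
    (summable_inv_add_nat_sq hε) fun k x (hx : ε < x) => by
      rw [norm_of_nonneg (by positivity)]
      gcongr
  exact fun u hu => (tendsto_add_atTop_nat 1).eventually (h u hu)

theorem abs_inv_nat_succ_sub_inv_add_nat_le {ε R x : ℝ} (hε : 0 < ε) (hx : x ∈ Set.Ioo ε R)
    (k : ℕ) : |((k : ℝ) + 1)⁻¹ - (x + k)⁻¹| ≤ (R + 1) * ((min ε 1 + k) ^ 2)⁻¹ := by
  obtain ⟨hεx, hxR⟩ := hx
  have hx0 : 0 < x := hε.trans hεx
  have hm : 0 < min ε 1 := lt_min hε one_pos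
  have hmk : min ε 1 + k ≤ k + 1 := by linarith [min_le_right ε 1]
  have hmx : min ε 1 + k ≤ x + k := by linarith [min_le_left ε 1]
  have hnum : |x + k - (k + 1)| ≤ R + 1 := by
    rw [abs_le]; constructor <;> linarith
  have hden : (0 : ℝ) < (k + 1) * (x + k) := by positivity
  rw [inv_sub_inv (by positivity) (by positivity), abs_div, abs_of_pos hden, ← div_eq_mul_inv, sq]
  exact div_le_div₀ (by linarith) hnum (by positivity)
    (mul_le_mul hmk hmx (by positivity) (by positivity))

theorem tendsto_log_sub_sum_range_succ_inv :
    Tendsto (fun n : ℕ => log n - ∑ k ∈ range (n + 1), ((k : ℝ) + 1)⁻¹) atTop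
      (𝓝 (-eulerMascheroniConstant)) := by
  have h := (tendsto_harmonic_sub_log.add tendsto_one_div_add_atTop_nhds_zero_nat).neg
  rw [add_zero] at h
  refine h.congr fun n => ?_
  push_cast [harmonic, sum_range_succ]
  ring

theorem digammaSeq_eq_add_sum (x : ℝ) (n : ℕ) :
    digammaSeq x n = (log n - ∑ k ∈ range (n + 1), ((k : ℝ) + 1)⁻¹)
      + ∑ k ∈ range (n + 1), (((k : ℝ) + 1)⁻¹ - (x + k)⁻¹) := by
  rw [digammaSeq, sum_sub_distrib]
  ring

theorem tendstoUniformlyOn_digammaSeq {ε R : ℝ} (hε : 0 < ε) :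
    TendstoUniformlyOn (fun n x => digammaSeq x n) digammaSeries atTop (Set.Ioo ε R) := by
  have hseries := tendstoUniformlyOn_tsum_nat
    ((summable_inv_add_nat_sq (lt_min hε one_pos)).mul_left (R + 1))
    fun k x hx => (Real.norm_eq_abs _).trans_le (abs_inv_nat_succ_sub_inv_add_nat_le hε hx k)
  have hshift : TendstoUniformlyOn
      (fun n (x : ℝ) => ∑ k ∈ range (n + 1), (((k : ℝ) + 1)⁻¹ - (x + k)⁻¹))
      (fun x : ℝ => ∑' k : ℕ, (((k : ℝ) + 1)⁻¹ - (x + k)⁻¹)) atTop (Set.Ioo ε R) :=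
    fun u hu => (tendsto_add_atTop_nat 1).eventually (hseries u hu)
  convert (tendsto_log_sub_sum_range_succ_inv.tendstoUniformlyOn_const (Set.Ioo ε R)).add hshift
    using 1
  · ext n x
    exact digammaSeq_eq_add_sum x n
  · rfl

theorem hasDerivAt_log_Gamma {x : ℝ} (hx : 0 < x) :
    HasDerivAt (fun s => log (Gamma s)) (digammaSeries x) x :=
  hasDerivAt_of_tendstoUniformlyOn isOpen_Ioo (tendstoUniformlyOn_digammaSeq (half_pos hx))
    (Eventually.of_forall fun n _ hy => hasDerivAt_logGammaSeq n ((half_pos hx).trans hy.1))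
    (fun _ hy => BohrMollerup.tendsto_log_gamma ((half_pos hx).trans hy.1))
    ⟨half_lt_self hx, lt_add_one x⟩

theorem digamma_eq_digammaSeries {x : ℝ} (hx : 0 < x) : digamma x = digammaSeries x :=
  (hasDerivAt_log_Gamma hx).deriv

theorem hasDerivAt_digamma_trigammaSeries {x : ℝ} (hx : 0 < x) :
    HasDerivAt digamma (trigammaSeries x) x :=
  hasDerivAt_of_tendstoUniformlyOn isOpen_Ioi (tendstoUniformlyOn_trigammaSeq (half_pos hx))
    (Eventually.of_forall fun n _ hy => hasDerivAt_digammaSeq n ((half_pos hx).trans hy))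
    (fun y hy => digamma_eq_digammaSeries ((half_pos hx).trans hy) ▸
      (tendstoUniformlyOn_digammaSeq (half_pos hx) (R := y + 1)).tendsto_at ⟨hy, lt_add_one y⟩)
    (half_lt_self hx)

theorem trigamma_eq_trigammaSeries {x : ℝ} (hx : 0 < x) : trigamma x = trigammaSeries x :=
  (hasDerivAt_digamma_trigammaSeries hx).deriv

theorem hasDerivAt_digamma {x : ℝ} (hx : 0 < x) : HasDerivAt digamma (trigamma x) x :=
  trigamma_eq_trigammaSeries hx ▸ hasDerivAt_digamma_trigammaSeries hx

theorem hasDerivAt_digamma_mul_add_one_sub {c α : ℝ} (hc : 0 < c * α + 1) (h1 : 0 < α + 1) :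
    HasDerivAt (fun α => digamma (c * α + 1) - digamma (α + 1))
      (c * trigamma (c * α + 1) - trigamma (α + 1)) α := by
  have hc' := (hasDerivAt_digamma hc).comp α (((hasDerivAt_id α).const_mul c).add_const 1)
  have h1' := (hasDerivAt_digamma h1).comp α ((hasDerivAt_id α).add_const 1)
  exact (hc'.sub h1').congr_deriv (by simp [mul_comm])

theorem inv_sq_lt_sum_fin_mul_add {K : ℕ} (hK : 2 ≤ K) {α : ℝ} (hα : 0 < K * α + 1) (m : ℕ) :
    ((α + 1 + m) ^ 2)⁻¹ < ∑ j : Fin K, (K : ℝ) * ((K * α + 1 + ↑(m * K + j)) ^ 2)⁻¹ := by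
  have hle (j : ℕ) : K * α + 1 + ((m * K + j : ℕ) : ℝ) = K * (α + 1 + m) - (K - 1 - j) := by
    push_cast; ring
  calc ((α + 1 + m) ^ 2)⁻¹ = ∑ _j : Fin K, (K : ℝ) * ((K * (α + 1 + m)) ^ 2)⁻¹ := by
        rw [sum_const, card_univ, Fintype.card_fin, nsmul_eq_mul]
        field_simp
    _ < ∑ j : Fin K, (K : ℝ) * ((K * α + 1 + ↑(m * K + j)) ^ 2)⁻¹ := by
        refine sum_lt_sum (fun j _ => ?_) ⟨⟨0, by omega⟩, mem_univ _, ?_⟩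
        · have hj : (j : ℝ) + 1 ≤ K := by exact_mod_cast j.isLt
          gcongr
          rw [hle]; linarith
        · have hK1 : (1 : ℝ) < K := by exact_mod_cast hK
          gcongr
          rw [hle]
          simpa using hK1

theorem trigammaSeries_lt_mul_trigammaSeries {K : ℕ} (hK : 2 ≤ K) {α : ℝ}
    (hα : 0 < K * α + 1) : trigammaSeries (α + 1) < K * trigammaSeries (K * α + 1) := by
  have : NeZero K := ⟨by omega⟩
  have hα1 : 0 < α + 1 := by
    have : (2 : ℝ) ≤ K := by exact_mod_cast hK
    by_contra! h
    nlinarith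
  have hblocks := ((summable_inv_add_nat_sq hα).hasSum.mul_left (K : ℝ)).sum_fin_mul_add (K := K)
  exact hasSum_lt (fun m => (inv_sq_lt_sum_fin_mul_add hK hα m).le)
    (inv_sq_lt_sum_fin_mul_add hK hα 0) (summable_inv_add_nat_sq hα1).hasSum hblocks

/-- For an integer `K ≥ 2`, the function `g⁻¹(α) = ψ(Kα + 1) − ψ(α + 1)` is strictly
increasing on `[0, ∞)`; equivalently, its derivative `K ψ₁(Kα + 1) − ψ₁(α + 1)` is
strictly positive for all `α ≥ 0`. -/
theorem nsb_strictMono (K : ℕ) (hK : 2 ≤ K) :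
    StrictMonoOn (fun α : ℝ => digamma ((K : ℝ) * α + 1) - digamma (α + 1))
        (Set.Ici (0 : ℝ)) ∧
      ∀ α : ℝ, 0 ≤ α → 0 < (K : ℝ) * trigamma ((K : ℝ) * α + 1) - trigamma (α + 1) := by
  have hpos : ∀ α : ℝ, 0 ≤ α → 0 < (K : ℝ) * trigamma ((K : ℝ) * α + 1) - trigamma (α + 1) := by
    intro α hα
    rw [trigamma_eq_trigammaSeries (by positivity), trigamma_eq_trigammaSeries (by positivity)]
    linarith [trigammaSeries_lt_mul_trigammaSeries hK (by positivity : 0 < (K : ℝ) * α + 1)]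
  have hderiv (α : ℝ) (hα : 0 ≤ α) := hasDerivAt_digamma_mul_add_one_sub
    (by positivity : 0 < (K : ℝ) * α + 1) (by positivity : 0 < α + 1)
  refine ⟨strictMonoOn_of_deriv_pos (convex_Ici 0)
    (fun α hα => (hderiv α hα).continuousAt.continuousWithinAt) fun α hα => ?_, hpos⟩
  rw [interior_Ici] at hα
  exact (hderiv α hα.le).deriv ▸ hpos α hα.le
end
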